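/- Every stable real n×n matrix A is similar to a matrix of the form J − R with J skew-symmetric and R symmetric positive-definite. -/

import Mathlib

/-!
Lyapunov's argument through the Cayley transform. If `A` is stable then `1 - A` is invertible and
`W = (1 + A)(1 - A)⁻¹` has its spectrum in the open unit disc, because `μ ↦ (μ - 1)/(μ + 1)` maps
`σ(W)` into `σ(A)` and sends the closed exterior of the disc to the closed right half-plane. By
Gelfand's formula the powers of `W` decay geometrically, so `P = ∑ (Wᵏ)ᵀ Wᵏ` converges to a positive
definite matrix with `Wᵀ P W = P - 1`; substituting `W (1 - A) = 1 + A` turns this into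
`Aᵀ P + P A = -½ (1 - A)ᵀ (1 - A)`, which is negative definite. Writing `P = Qᵀ Q`, the matrix
`M = Q A Q⁻¹` has negative definite symmetric part, and `M = ½ (M - Mᵀ) - (-½ (M + Mᵀ))`.
-/

open Matrix Filter
open scoped NNReal

lemma Complex.norm_lt_one_of_re_sub_one_div_add_one_neg {μ : ℂ}
    (h : ((μ - 1) / (μ + 1)).re < 0) : ‖μ‖ < 1 := by
  rw [Complex.div_re, ← add_div, div_neg_iff] at h
  have hnum : (μ.re - 1) * (μ.re + 1) + μ.im * μ.im < 0 := by
    rcases h with ⟨-, hden⟩ | ⟨hnum, -⟩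
    · exact absurd hden (Complex.normSq_nonneg _).not_gt
    · simpa using hnum
  rw [← sq_lt_one_iff₀ (norm_nonneg _), Complex.sq_norm, Complex.normSq_apply]
  linarith

section CayleyTransform

variable {A : Type*} [Ring A] [Algebra ℂ A] {a w : A}

lemma spectrum.isUnit_one_sub_of_forall_re_neg (ha : ∀ μ ∈ spectrum ℂ a, μ.re < 0) :
    IsUnit (1 - a) := by
  simpa using spectrum.notMem_iff.mp fun h => (ha 1 h).not_ge zero_le_one

lemma spectrum.sub_one_div_add_one_mem_of_mul_one_sub_eq (ha : IsUnit (1 - a))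
    (hw : w * (1 - a) = 1 + a) {μ : ℂ} (hμ : μ ∈ spectrum ℂ w) :
    (μ - 1) / (μ + 1) ∈ spectrum ℂ a := by
  have hcomp : (algebraMap ℂ A μ - w) * (1 - a) = algebraMap ℂ A (μ - 1) - (μ + 1) • a := by
    rw [sub_mul, hw, mul_sub, mul_one, ← Algebra.smul_def, map_sub, map_one, add_smul, one_smul]
    abel
  have key : ¬ IsUnit (algebraMap ℂ A (μ - 1) - (μ + 1) • a) := by
    rw [← hcomp, ← ha.unit_spec, Units.isUnit_mul_units]
    exact spectrum.mem_iff.mp hμ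
  rcases eq_or_ne (μ + 1) 0 with hμ1 | hμ1
  · refine absurd ?_ key
    rw [hμ1, zero_smul, sub_zero]
    have h2 : μ - 1 ≠ 0 := fun h => two_ne_zero (α := ℂ) (by linear_combination hμ1 - h)
    exact (isUnit_iff_ne_zero.mpr h2).map _
  · rw [spectrum.mem_iff]
    rwa [show algebraMap ℂ A (μ - 1) - (μ + 1) • a
        = (Units.mk0 _ hμ1) • (algebraMap ℂ A ((μ - 1) / (μ + 1)) - a) by
      simp only [Units.smul_mk0, smul_sub, Algebra.algebraMap_eq_smul_one, smul_smul,
        mul_div_cancel₀ _ hμ1],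
      isUnit_smul_iff] at key

lemma spectrum.norm_lt_one_of_mul_one_sub_eq (ha : ∀ μ ∈ spectrum ℂ a, μ.re < 0)
    (hw : w * (1 - a) = 1 + a) {μ : ℂ} (hμ : μ ∈ spectrum ℂ w) : ‖μ‖ < 1 :=
  Complex.norm_lt_one_of_re_sub_one_div_add_one_neg <| ha _ <|
    sub_one_div_add_one_mem_of_mul_one_sub_eq (isUnit_one_sub_of_forall_re_neg ha) hw hμ

end CayleyTransform

section GelfandFormula

variable {A : Type*} [NormedRing A] [NormedAlgebra ℂ A] [CompleteSpace A] {a : A}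

lemma spectrum.spectralRadius_lt_one_of_forall_norm_lt_one
    (ha : ∀ μ ∈ spectrum ℂ a, ‖μ‖ < 1) : spectralRadius ℂ a < 1 := by
  rcases (spectrum ℂ a).eq_empty_or_nonempty with he | hne
  · simp [spectralRadius, he]
  · exact_mod_cast spectrum.spectralRadius_lt_of_forall_lt_of_nonempty hne
      (r := 1) fun μ hμ => by exact_mod_cast ha μ hμ

lemma spectrum.eventually_norm_pow_le_of_spectralRadius_lt {r : ℝ≥0}
    (ha : spectralRadius ℂ a < r) : ∀ᶠ k in atTop, ‖a ^ k‖ ≤ (r : ℝ) ^ k := by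
  filter_upwards [(pow_nnnorm_pow_one_div_tendsto_nhds_spectralRadius a).eventually_lt_const ha,
    eventually_ge_atTop 1] with k hk hk1
  have hk0 : (k : ℝ) ≠ 0 := by positivity
  have := ENNReal.rpow_le_rpow hk.le (by positivity : (0 : ℝ) ≤ k)
  rw [← ENNReal.rpow_mul, one_div, inv_mul_cancel₀ hk0, ENNReal.rpow_one,
    ENNReal.rpow_natCast, ← ENNReal.coe_pow, ENNReal.coe_le_coe] at this
  exact_mod_cast this

end GelfandFormula

lemma star_mul_tsum_star_pow_mul_pow_mul {R : Type*} [Ring R] [StarRing R] [TopologicalSpace R]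
    [IsTopologicalRing R] [T2Space R] {w : R} (hw : Summable fun k => star (w ^ k) * w ^ k) :
    star w * (∑' k, star (w ^ k) * w ^ k) * w = (∑' k, star (w ^ k) * w ^ k) - 1 := by
  rw [← hw.tsum_mul_left, ← (hw.mul_left _).tsum_mul_right, hw.tsum_eq_zero_add, pow_zero,
    star_one, one_mul, add_sub_cancel_left]
  refine tsum_congr fun k => ?_
  simp only [pow_succ, star_mul, mul_assoc]

lemma two_nsmul_star_mul_add_mul_eq_of_cayley {R : Type*} [Ring R] [StarRing R] {a w p : R}
    (hw : w * (1 - a) = 1 + a) (hp : star w * p * w = p - 1) :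
    2 • (star a * p + p * a) = -(star (1 - a) * (1 - a)) := by
  have h : star (1 + a) * p * (1 + a) = star (1 - a) * (p - 1) * (1 - a) := by
    rw [← hw, ← hp, star_mul]
    simp only [mul_assoc]
  simp only [star_add, star_sub, star_one] at h ⊢
  rw [← sub_eq_zero] at h ⊢
  convert h using 1
  noncomm_ring

namespace Matrix

variable {ι : Type*} [Fintype ι] [DecidableEq ι]

section Frobenius

attribute [local instance] frobeniusNormedAddCommGroup frobeniusNormedRing frobeniusNormedAlgebra

lemma summable_star_pow_mul_pow {W : Matrix ι ι ℝ}
    (hW : ∀ μ ∈ spectrum ℂ (W.map (algebraMap ℝ ℂ)), ‖μ‖ < 1) :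
    Summable fun k => star (W ^ k) * W ^ k := by
  obtain ⟨r, hr, hr1⟩ := ENNReal.lt_iff_exists_nnreal_btwn.mp
    (spectrum.spectralRadius_lt_one_of_forall_norm_lt_one hW)
  have hr1 : (r : ℝ) < 1 := by exact_mod_cast hr1
  refine .of_norm_bounded_eventually_nat (g := fun k => ((r : ℝ) ^ 2) ^ k)
    (summable_geometric_of_lt_one (by positivity) (pow_lt_one₀ r.2 hr1 two_ne_zero)) ?_
  filter_upwards [spectrum.eventually_norm_pow_le_of_spectralRadius_lt hr] with k hk
  have hnorm : ‖W ^ k‖ = ‖W.map (algebraMap ℝ ℂ) ^ k‖ := by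
    rw [← RingHom.mapMatrix_apply, ← map_pow, RingHom.mapMatrix_apply,
      frobenius_norm_map_eq _ _ fun x => by simp]
  calc ‖star (W ^ k) * W ^ k‖ ≤ ‖star (W ^ k)‖ * ‖W ^ k‖ := norm_mul_le _ _
    _ = ‖W ^ k‖ ^ 2 := by rw [star_eq_conjTranspose, frobenius_norm_conjTranspose, sq]
    _ ≤ ((r : ℝ) ^ k) ^ 2 := by gcongr; exact hnorm ▸ hk
    _ = ((r : ℝ) ^ 2) ^ k := by ring

end Frobenius

lemma posDef_tsum_star_pow_mul_pow {W : Matrix ι ι ℝ}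
    (hW : Summable fun k => star (W ^ k) * W ^ k) : (∑' k, star (W ^ k) * W ^ k).PosDef := by
  refine .of_dotProduct_mulVec_pos ?_ fun x hx => ?_
  · rw [IsHermitian, ← star_eq_conjTranspose, tsum_star]
    simp only [star_mul, star_star]
  let q : Matrix ι ι ℝ →ₗ[ℝ] ℝ :=
    { toFun := fun M => star x ⬝ᵥ M *ᵥ x
      map_add' := fun M N => by simp [add_mulVec, dotProduct_add]
      map_smul' := fun c M => by simp [smul_mulVec, dotProduct_smul] }
  have hq := hW.hasSum.map q q.continuous_of_finiteDimensional
  refine (PosDef.one.dotProduct_mulVec_pos hx).trans_le ?_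
  simpa [q] using le_hasSum hq 0 fun k _ =>
    (posSemidef_conjTranspose_mul_self (W ^ k)).dotProduct_mulVec_nonneg x

lemma isUnit_of_isUnit_map {K L : Type*} [Field K] [CommRing L] [Nontrivial L] (f : K →+* L)
    {M : Matrix ι ι K} (h : IsUnit (M.map f)) : IsUnit M := by
  rw [isUnit_iff_isUnit_det, ← RingHom.mapMatrix_apply, ← RingHom.map_det] at h
  rw [isUnit_iff_isUnit_det, isUnit_iff_ne_zero]
  rintro h0
  rw [h0, map_zero] at h
  exact not_isUnit_zero h

theorem exists_posDef_lyapunov {A : Matrix ι ι ℝ}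
    (hA : ∀ μ ∈ spectrum ℂ (A.map (algebraMap ℝ ℂ)), μ.re < 0) :
    ∃ P : Matrix ι ι ℝ, P.PosDef ∧ (-(Aᵀ * P + P * A)).PosDef := by
  let φ := (algebraMap ℝ ℂ).mapMatrix (m := ι)
  have h1A : IsUnit (1 - A) := isUnit_of_isUnit_map (algebraMap ℝ ℂ) <| by
    change IsUnit (φ (1 - A))
    rw [map_sub, map_one]
    exact spectrum.isUnit_one_sub_of_forall_re_neg hA
  set W := (1 + A) * (1 - A)⁻¹
  have hW : W * (1 - A) = 1 + A := by
    rw [mul_assoc, nonsing_inv_mul _ ((isUnit_iff_isUnit_det _).mp h1A), mul_one]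
  have hWC : φ W * (1 - φ A) = 1 + φ A := by simpa using congrArg φ hW
  have hS := summable_star_pow_mul_pow fun μ hμ =>
    spectrum.norm_lt_one_of_mul_one_sub_eq hA hWC hμ
  refine ⟨_, posDef_tsum_star_pow_mul_pow hS, ?_⟩
  have h := two_nsmul_star_mul_add_mul_eq_of_cayley hW (star_mul_tsum_star_pow_mul_pow_mul hS)
  rw [star_eq_conjTranspose, conjTranspose_eq_transpose_of_trivial, ← neg_eq_iff_eq_neg] at h
  convert (PosDef.conjTranspose_mul_self _ (mulVec_injective_of_isUnit h1A)).smul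
    (a := (2⁻¹ : ℝ)) (by norm_num) using 1
  rw [← star_eq_conjTranspose, ← h]
  module

open scoped MatrixOrder in
lemma PosDef.exists_isUnit_star_mul_self_eq {P : Matrix ι ι ℝ} (hP : P.PosDef) :
    ∃ Q : Matrix ι ι ℝ, IsUnit Q ∧ star Q * Q = P := by
  have hP0 : 0 ≤ P := nonneg_iff_posSemidef.mpr hP.posSemidef
  refine ⟨CFC.sqrt P, (CFC.isUnit_sqrt_iff P hP0).mpr hP.isUnit, ?_⟩
  rw [(CFC.sqrt_nonneg P).isSelfAdjoint.star_eq, CFC.sqrt_mul_sqrt_self P hP0]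

theorem exists_similar_skew_sub_posDef_of_lyapunov {A P : Matrix ι ι ℝ} (hP : P.PosDef)
    (hAP : (-(Aᵀ * P + P * A)).PosDef) :
    ∃ T J R : Matrix ι ι ℝ, IsUnit T ∧ T * A * T⁻¹ = J - R ∧ Jᵀ = -J ∧ R.PosDef := by
  obtain ⟨Q, hQ, rfl⟩ := hP.exists_isUnit_star_mul_self_eq
  set M := Q * A * Q⁻¹
  have hsym : star Q⁻¹ * -(Aᵀ * (star Q * Q) + star Q * Q * A) * Q⁻¹ = -(Mᵀ + M) := by
    have h₁ : Q * Q⁻¹ = 1 := mul_nonsing_inv _ ((isUnit_iff_isUnit_det _).mp hQ)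
    have h₂ : star Q⁻¹ * star Q = 1 := by rw [← star_mul, h₁, star_one]
    simp only [M, ← conjTranspose_eq_transpose_of_trivial, ← star_eq_conjTranspose, star_mul]
    simp only [mul_neg, neg_mul, mul_add, add_mul, mul_assoc, h₁, mul_one]
    simp only [← mul_assoc, h₂, one_mul]
  refine ⟨Q, (2⁻¹ : ℝ) • (M - Mᵀ), (2⁻¹ : ℝ) • -(Mᵀ + M), hQ, by module, ?_, ?_⟩
  · rw [transpose_smul, transpose_sub, transpose_transpose]
    module
  · rw [← hsym]
    exact ((isUnit_nonsing_inv_iff.mpr hQ).posDef_star_left_conjugate_iff.mpr hAP).smul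
      (by norm_num)

end Matrix

/-- Every stable real matrix is similar to `J − R` with `J` skew-symmetric and
`R` symmetric positive-definite. -/
theorem stable_similar_to_skew_minus_posdef {n : ℕ} (A : Matrix (Fin n) (Fin n) ℝ)
    (hA : ∀ μ ∈ spectrum ℂ (A.map (algebraMap ℝ ℂ)), μ.re < 0) :
    ∃ T J R : Matrix (Fin n) (Fin n) ℝ,
      IsUnit T ∧ T * A * T⁻¹ = J - R ∧ Jᵀ = -J ∧ R.PosDef := by
  obtain ⟨P, hP, hAP⟩ := exists_posDef_lyapunov hA
  exact exists_similar_skew_sub_posDef_of_lyapunov hP hAP
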